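/- For positive integers n and 0 ≤ k ≤ n, ∑_{r=0}^{⌊n/2⌋} C(n−k,r) C(n−r,r) 2^{n−2r} equals the total number of lattice points of Q_{n,k}, i.e. the number of lattice points x ∈ ℕ^n with x_i ≤ 1 for i ≤ k and x_1 + ⋯ + x_n ≤ n. -/
import Mathlib

open Finset Polynomial

/-! ### Auxiliary: coefficients of (2X+1)^N -/

lemma coeff_twoXp1 (N i : ℕ) : ((2 * X + 1 : ℕ[X]) ^ N).coeff i = N.choose i * 2 ^ i := by
  have hexp : (2 * X + 1 : ℕ[X]) ^ N
      = ∑ j ∈ range (N + 1), C (2 ^ j) * (C (N.choose j) * X ^ j) := by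
    rw [add_pow]
    refine Finset.sum_congr rfl fun j hj => ?_
    rw [one_pow, mul_one, mul_pow,
      show ((2 : ℕ[X])) = C 2 by simp, ← C_pow,
      show ((N.choose j : ℕ[X])) = C (N.choose j) by simp]
    ring
  rw [hexp, finset_sum_coeff]
  simp only [coeff_C_mul, coeff_X_pow]
  rcases le_or_gt i N with h | h
  · rw [Finset.sum_eq_single i]
    · rw [if_pos rfl]; ring
    · intro j _ hj; simp [Ne.symm hj]
    · intro hi; exact absurd (mem_range.2 (by omega)) hi
  · rw [Finset.sum_eq_zero, Nat.choose_eq_zero_of_lt h, zero_mul]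
    intro j hj
    rw [mem_range] at hj
    simp [show ¬ i = j by omega]

/-! ### The key binomial identity, proved via two expansions of `(2X+1)^k (1+X)^(2m)` -/

lemma key_poly (k m : ℕ) :
    ∑ s ∈ range (k + 1), k.choose s * (k + m - s + m).choose m
    = ∑ r ∈ range ((k + m) / 2 + 1),
        m.choose r * (k + m - r).choose r * 2 ^ (k + m - 2 * r) := by
  set T : ℕ := ∑ a ∈ range (k + m + 1), k.choose a * 2 ^ (k - a) * (2 * m).choose (m + a) with hT
  -- reflect the LHS
  have lhs_eq : ∑ s ∈ range (k + 1), k.choose s * (k + m - s + m).choose m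
      = ∑ s ∈ range (k + 1), k.choose s * (2 * m + s).choose m := by
    rw [← Finset.sum_range_reflect]
    refine Finset.sum_congr rfl fun s hs => ?_
    rw [mem_range] at hs
    rw [show k + 1 - 1 - s = k - s by omega, Nat.choose_symm (by omega : s ≤ k),
      show k + m - (k - s) + m = 2 * m + s by omega]
  -- coeff m of (X + C 2)^k * (1+X)^(2m) equals T
  have q_eq : (((X + C 2 : ℕ[X]) ^ k) * (1 + X) ^ (2 * m)).coeff m = T := by
    rw [coeff_mul, Finset.Nat.sum_antidiagonal_eq_sum_range_succ_mk]
    simp only [coeff_X_add_C_pow, coeff_one_add_X_pow, Nat.cast_id]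
    have step1 : ∑ a ∈ range (m + 1), 2 ^ (k - a) * k.choose a * (2 * m).choose (m - a)
        = ∑ a ∈ range (m + 1), k.choose a * 2 ^ (k - a) * (2 * m).choose (m + a) := by
      refine Finset.sum_congr rfl fun a ha => ?_
      rw [mem_range] at ha
      rw [show (2 * m).choose (m - a) = (2 * m).choose (m + a) by
        rw [← Nat.choose_symm (by omega : m - a ≤ 2 * m), show 2 * m - (m - a) = m + a by omega]]
      ring
    rw [step1, hT]
    exact Finset.sum_subset (Finset.range_subset_range.2 (by omega : m + 1 ≤ k + m + 1))
      (fun a _ ha => by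
        rw [mem_range, not_lt] at ha
        rw [Nat.choose_eq_zero_of_lt (by omega : 2 * m < m + a), mul_zero])
  -- coeff (k+m) of (2X+1)^k * (1+X)^(2m) equals T
  have p_eq : (((2 * X + 1 : ℕ[X]) ^ k) * (1 + X) ^ (2 * m)).coeff (k + m) = T := by
    rw [coeff_mul, Finset.Nat.sum_antidiagonal_eq_sum_range_succ_mk]
    simp only [coeff_twoXp1, coeff_one_add_X_pow, Nat.cast_id]
    have shrink : ∑ j ∈ range (k + m + 1), k.choose j * 2 ^ j * (2 * m).choose (k + m - j)
        = ∑ j ∈ range (k + 1), k.choose j * 2 ^ j * (2 * m).choose (k + m - j) :=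
      (Finset.sum_subset (Finset.range_subset_range.2 (by omega : k + 1 ≤ k + m + 1))
        (fun j _ hj => by
          rw [mem_range, not_lt] at hj
          rw [Nat.choose_eq_zero_of_lt (by omega : k < j), zero_mul, zero_mul])).symm
    rw [shrink, ← Finset.sum_range_reflect]
    have step2 : ∑ j ∈ range (k + 1),
          k.choose (k + 1 - 1 - j) * 2 ^ (k + 1 - 1 - j) * (2 * m).choose (k + m - (k + 1 - 1 - j))
        = ∑ j ∈ range (k + 1), k.choose j * 2 ^ (k - j) * (2 * m).choose (m + j) := by
      refine Finset.sum_congr rfl fun j hj => ?_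
      rw [mem_range] at hj
      rw [show k + 1 - 1 - j = k - j by omega, Nat.choose_symm (by omega : j ≤ k),
        show k + m - (k - j) = m + j by omega]
    rw [step2, hT]
    exact Finset.sum_subset (Finset.range_subset_range.2 (by omega : k + 1 ≤ k + m + 1))
      (fun a _ ha => by
        rw [mem_range, not_lt] at ha
        rw [Nat.choose_eq_zero_of_lt (by omega : k < a), zero_mul, zero_mul])
  -- second expansion of the same coefficient
  have p_eq2 : (((2 * X + 1 : ℕ[X]) ^ k) * (1 + X) ^ (2 * m)).coeff (k + m)
      = ∑ r ∈ range (m + 1), m.choose r * ((k + m - r).choose r * 2 ^ (k + m - 2 * r)) := by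
    have hsq : ((1 + X : ℕ[X]) ^ (2 * m)) = (X ^ 2 + (2 * X + 1)) ^ m := by
      rw [show (X ^ 2 + (2 * X + 1) : ℕ[X]) = (1 + X) ^ 2 by ring, ← pow_mul]
    have key : ∀ p : ℕ[X], p ^ k * (X ^ 2 + p) ^ m
        = ∑ r ∈ range (m + 1), C (m.choose r) * (X ^ (2 * r) * p ^ (k + m - r)) := by
      intro p
      rw [add_pow, Finset.mul_sum]
      refine Finset.sum_congr rfl fun r hr => ?_
      rw [mem_range] at hr
      rw [show ((m.choose r : ℕ[X])) = C (m.choose r) by simp,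
        show k + m - r = (m - r) + k by omega, pow_add, ← pow_mul]
      ring
    rw [hsq, key, finset_sum_coeff]
    refine Finset.sum_congr rfl fun r hr => ?_
    rw [mem_range] at hr
    rw [coeff_C_mul, coeff_X_pow_mul']
    rcases le_or_gt (2 * r) (k + m) with h2r | h2r
    · rw [if_pos h2r, coeff_twoXp1]
      rw [show (k + m - r).choose (k + m - 2 * r) = (k + m - r).choose r by
        rw [← Nat.choose_symm (by omega : r ≤ k + m - r), show k + m - r - r = k + m - 2 * r by omega]]
    · rw [if_neg (by omega), mul_zero,
        Nat.choose_eq_zero_of_lt (by omega : k + m - r < r), zero_mul, mul_zero]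
  -- first expansion: LHS is coeff m of the Q polynomial
  have hQ : ∑ s ∈ range (k + 1), k.choose s * (2 * m + s).choose m
      = (((X + C 2 : ℕ[X]) ^ k) * (1 + X) ^ (2 * m)).coeff m := by
    have hx : (X + C 2 : ℕ[X]) ^ k = ∑ s ∈ range (k + 1), C (k.choose s) * (1 + X) ^ s := by
      rw [show (X + C 2 : ℕ[X]) = (1 + X) + 1 by
          rw [show (2 : ℕ) = 1 + 1 from rfl, C_add, C_1]; ring, add_pow]
      refine Finset.sum_congr rfl fun s hs => ?_
      rw [one_pow, mul_one, show ((k.choose s : ℕ[X])) = C (k.choose s) by simp]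
      ring
    rw [hx, Finset.sum_mul, finset_sum_coeff]
    refine Finset.sum_congr rfl fun s hs => ?_
    rw [mul_assoc, ← pow_add, coeff_C_mul, coeff_one_add_X_pow, Nat.cast_id,
      show s + 2 * m = 2 * m + s by omega]
  rw [lhs_eq, hQ, q_eq, ← p_eq, p_eq2]
  -- range juggling
  have hvan : ∀ r : ℕ, k + m < 2 * r →
      m.choose r * ((k + m - r).choose r * 2 ^ (k + m - 2 * r)) = 0 := fun r h => by
    rw [Nat.choose_eq_zero_of_lt (by omega : k + m - r < r), zero_mul, mul_zero]
  have hvan2 : ∀ r : ℕ, m < r →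
      m.choose r * ((k + m - r).choose r * 2 ^ (k + m - 2 * r)) = 0 := fun r h => by
    rw [Nat.choose_eq_zero_of_lt h, zero_mul]
  have e1 : ∑ r ∈ range (m + 1), m.choose r * ((k + m - r).choose r * 2 ^ (k + m - 2 * r))
      = ∑ r ∈ range (m + (k + m) / 2 + 2), m.choose r * ((k + m - r).choose r * 2 ^ (k + m - 2 * r)) :=
    Finset.sum_subset (Finset.range_subset_range.2 (by omega))
      (fun r _ hr => hvan2 r (by rw [mem_range, not_lt] at hr; omega))
  have e2 : ∑ r ∈ range ((k + m) / 2 + 1), m.choose r * ((k + m - r).choose r * 2 ^ (k + m - 2 * r))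
      = ∑ r ∈ range (m + (k + m) / 2 + 2), m.choose r * ((k + m - r).choose r * 2 ^ (k + m - 2 * r)) :=
    Finset.sum_subset (Finset.range_subset_range.2 (by omega))
      (fun r _ hr => hvan r (by rw [mem_range, not_lt] at hr; omega))
  rw [e1, ← e2]
  exact Finset.sum_congr rfl fun r _ => by ring

/-! ### Counting -/

noncomputable instance instFintypeSumEq (q B : ℕ) : Fintype {z : Fin q → ℕ // ∑ i, z i = B} :=
  Fintype.ofEquiv _ (Sym.equivNatSumOfFintype (Fin q) B)

def leEquiv (m B : ℕ) :
    {y : Fin m → ℕ // ∑ i, y i ≤ B} ≃ {z : Fin (m + 1) → ℕ // ∑ i, z i = B} where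
  toFun y := ⟨Fin.cons (B - ∑ i, y.1 i) y.1, by
    rw [Fin.sum_cons]; have := y.2; omega⟩
  invFun z := ⟨Fin.tail z.1, by
    have h := (Fin.sum_univ_succ z.1).symm.trans z.2
    simp only [Fin.tail]
    omega⟩
  left_inv y := Subtype.ext (by
    funext i
    simp [Fin.tail_cons])
  right_inv z := Subtype.ext (by
    show Fin.cons (B - ∑ i, Fin.tail z.1 i) (Fin.tail z.1) = z.1
    have h := (Fin.sum_univ_succ z.1).symm.trans z.2
    have h0 : B - ∑ i, Fin.tail z.1 i = z.1 0 := by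
      simp only [Fin.tail]; omega
    rw [h0]
    exact Fin.cons_self_tail z.1)

noncomputable instance instFintypeSumLe (m B : ℕ) : Fintype {y : Fin m → ℕ // ∑ i, y i ≤ B} :=
  Fintype.ofEquiv _ (leEquiv m B).symm

noncomputable instance instFintypeFiber (m c N : ℕ) :
    Fintype {y : Fin m → ℕ // ∑ i, y i + c ≤ N} :=
  Fintype.ofInjective
    (fun y => (⟨y.1, by have := y.2; omega⟩ : {y : Fin m → ℕ // ∑ i, y i ≤ N}))
    (fun a b h => by
      apply Subtype.ext
      have h2 := congrArg Subtype.val h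
      exact h2)

lemma card_sum_eq (q B : ℕ) :
    Nat.card {z : Fin q → ℕ // ∑ i, z i = B} = (q + B - 1).choose B := by
  rw [Nat.card_congr (Sym.equivNatSumOfFintype (Fin q) B).symm, Nat.card_eq_fintype_card,
    Sym.card_sym_eq_choose, Fintype.card_fin]

lemma card_sum_le (m B : ℕ) :
    Nat.card {y : Fin m → ℕ // ∑ i, y i ≤ B} = (B + m).choose m := by
  rw [Nat.card_congr (leEquiv m B), card_sum_eq]
  rw [show m + 1 + B - 1 = B + m by omega]
  rw [← Nat.choose_symm (Nat.le_add_right B m)]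
  congr 1
  omega

lemma sum_indicator {k : ℕ} (A : Finset (Fin k)) :
    ∑ i : Fin k, (if i ∈ A then (1 : ℕ) else 0) = A.card := by
  rw [Finset.sum_ite_mem, Finset.univ_inter, Finset.sum_const, smul_eq_mul, mul_one]

def mainEquiv (k m N : ℕ) :
    {x : Fin (k + m) → ℕ // (∀ i : Fin (k + m), (i : ℕ) < k → x i ≤ 1) ∧ ∑ i, x i ≤ N}
      ≃ {p : Finset (Fin k) × (Fin m → ℕ) // ∑ j, p.2 j + p.1.card ≤ N} where
  toFun x := ⟨⟨univ.filter fun i : Fin k => x.1 (Fin.castAdd m i) = 1,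
      fun j => x.1 (Fin.natAdd k j)⟩, by
    have hsplit := Fin.sum_univ_add (f := fun i => x.1 i)
    have hcard : (univ.filter fun i : Fin k => x.1 (Fin.castAdd m i) = 1).card
        = ∑ i : Fin k, x.1 (Fin.castAdd m i) := by
      rw [Finset.card_filter]
      refine Finset.sum_congr rfl fun i _ => ?_
      have h1 := x.2.1 (Fin.castAdd m i) (by simpa using i.2)
      split_ifs with h <;> omega
    have h2 := x.2.2
    dsimp only
    omega⟩
  invFun p := ⟨Fin.append (fun i => if i ∈ p.1.1 then 1 else 0) p.1.2, by
    constructor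
    · intro i hik
      have : i = Fin.castAdd m ⟨(i : ℕ), hik⟩ := by ext; simp
      rw [this, Fin.append_left]
      split_ifs <;> omega
    · rw [Fin.sum_univ_add]
      simp only [Fin.append_left, Fin.append_right]
      rw [sum_indicator]
      have := p.2
      omega⟩
  left_inv x := Subtype.ext (funext fun i => by
    dsimp only
    refine Fin.addCases (fun i => ?_) (fun j => ?_) i
    · simp only [Fin.append_left]
      have h1 := x.2.1 (Fin.castAdd m i) (by simpa using i.2)
      simp only [Finset.mem_filter, Finset.mem_univ, true_and]
      split_ifs with h <;> omega
    · simp only [Fin.append_right])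
  right_inv p := Subtype.ext (by
    dsimp only
    refine Prod.ext ?_ ?_
    · ext i
      simp only [Finset.mem_filter, Finset.mem_univ, true_and, Fin.append_left]
      split_ifs with hA <;> simp [hA]
    · funext j
      simp only [Fin.append_right])

lemma count_eq (k m N : ℕ) (hkN : k ≤ N) :
    ({x : Fin (k + m) → ℕ |
        (∀ i : Fin (k + m), (i : ℕ) < k → x i ≤ 1) ∧ ∑ i, x i ≤ N} : Set _).ncard
    = ∑ s ∈ range (k + 1), k.choose s * (N - s + m).choose m := by
  have h1 : Nat.card ↥{x : Fin (k + m) → ℕ |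
      (∀ i : Fin (k + m), (i : ℕ) < k → x i ≤ 1) ∧ ∑ i, x i ≤ N}
      = Nat.card {p : Finset (Fin k) × (Fin m → ℕ) // ∑ j, p.2 j + p.1.card ≤ N} :=
    Nat.card_congr (mainEquiv k m N)
  have h2 : Nat.card {p : Finset (Fin k) × (Fin m → ℕ) // ∑ j, p.2 j + p.1.card ≤ N}
      = Nat.card (Σ A : Finset (Fin k), {y : Fin m → ℕ // ∑ j, y j + A.card ≤ N}) :=
    Nat.card_congr (Equiv.subtypeProdEquivSigmaSubtype
      (fun (A : Finset (Fin k)) (y : Fin m → ℕ) => ∑ j, y j + A.card ≤ N))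
  have hfib : ∀ A : Finset (Fin k),
      Fintype.card {y : Fin m → ℕ // ∑ j, y j + A.card ≤ N}
        = (N - A.card + m).choose m := by
    intro A
    have hA : A.card ≤ N := le_trans (le_trans (Finset.card_le_univ A) (by simp)) hkN
    have hiff : ∀ y : Fin m → ℕ, (∑ j, y j + A.card ≤ N) ↔ (∑ j, y j ≤ N - A.card) := by
      intro y
      clear h1 h2
      omega
    rw [← Nat.card_eq_fintype_card, Nat.card_congr (Equiv.subtypeEquivRight hiff), card_sum_le]
  rw [← Nat.card_coe_set_eq, h1, h2, Nat.card_eq_fintype_card, Fintype.card_sigma]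
  rw [Finset.sum_congr rfl fun A _ => hfib A]
  rw [← Finset.powerset_univ, Finset.sum_powerset_apply_card
    (fun s => (N - s + m).choose m)]
  simp [Finset.card_univ]

/-! ### Main theorem -/

theorem stmt_18 (n k : ℕ) (hn : 0 < n) (hk : k ≤ n) :
    (∑ r ∈ Finset.range (n / 2 + 1),
        (n - k).choose r * (n - r).choose r * 2 ^ (n - 2 * r)) =
      {x : Fin n → ℕ |
        (∀ i : Fin n, (i : ℕ) < k → x i ≤ 1) ∧ ∑ i, x i ≤ n}.ncard := by
  obtain ⟨m, rfl⟩ : ∃ m, n = k + m := ⟨n - k, by omega⟩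
  rw [count_eq k m (k + m) (by omega)]
  rw [key_poly k m]
  simp only [Nat.add_sub_cancel_left]
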